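/- arXiv:1808.09645 — 2 statements merged into one kernel-verified Lean document; each statement's English description precedes it below -/
import Mathlib

section
/- Let v, Y ∈ ℝ^d with ‖v‖ = 1, ‖Y‖² ≤ B, and 0 < β ≤ 1/(3B). Define v⁺ = (v + β(vᵀY)Y)/‖v + β(vᵀY)Y‖. Then for each coordinate k, there exists Q_k with |Q_k| ≤ C B² β² (for an absolute constant C) such that v⁺_k - v_k = β((vᵀY)·Y_k - v_k·(vᵀY)²) + Q_k. -/
/-!
Write `s = ⟪v, Y⟫` and `r = ‖v + β s Y‖`, so that `r² = 1 + x` with `x = 2βs² + β²s²‖Y‖²`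
and `0 ≤ x ≤ 3βB`. The new coordinate is `(v_k + β s Y_k) / r`, and the second-order expansion
`(1 + x)^{-1/2} = 1 - x/2 + O(x²)` shows that it differs from `v_k + β s Y_k - β s² v_k` by
`O((βB)²)`, using `|v_k| ≤ 1`, `|s Y_k| ≤ ‖Y‖² ≤ B` and `β²s²‖Y‖² ≤ (βB)²`.
-/

open RealInnerProductSpace

/-- `r⁻¹ = (1 + x)^{-1/2}` with `x = r² - 1`: its first-order Taylor remainder. -/
lemma abs_inv_sub_one_add_half_sq_sub_one_le {r : ℝ} (hr : 1 ≤ r) :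
    |r⁻¹ - 1 + (r ^ 2 - 1) / 2| ≤ 3 / 8 * (r ^ 2 - 1) ^ 2 := by
  have hr0 : 0 < r := by linarith
  have key : r⁻¹ - 1 + (r ^ 2 - 1) / 2 = (r - 1) ^ 2 * ((r + 2) / (2 * r)) := by
    field_simp
    ring
  have hfrac : (r + 2) / (2 * r) ≤ 3 / 8 * (r + 1) ^ 2 := by
    rw [div_le_iff₀ (by positivity)]
    nlinarith [mul_nonneg (sub_nonneg.2 hr) (sub_nonneg.2 hr)]
  rw [key, abs_of_nonneg (by positivity)]
  calc (r - 1) ^ 2 * ((r + 2) / (2 * r)) ≤ (r - 1) ^ 2 * (3 / 8 * (r + 1) ^ 2) := by gcongr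
    _ = 3 / 8 * (r ^ 2 - 1) ^ 2 := by ring

lemma abs_inv_sub_one_le_half_sq_sub_one {r : ℝ} (hr : 1 ≤ r) :
    |r⁻¹ - 1| ≤ (r ^ 2 - 1) / 2 := by
  have hinv : r⁻¹ ≤ 1 := inv_le_one_of_one_le₀ hr
  rw [abs_of_nonpos (by linarith)]
  calc -(r⁻¹ - 1) = (r - 1) * r⁻¹ := by field_simp; ring
    _ ≤ (r - 1) * 1 := by gcongr
    _ ≤ (r ^ 2 - 1) / 2 := by nlinarith

lemma abs_inv_mul_add_sub_sub_le {r t u a x p : ℝ} (hr : 0 ≤ r) (hr2 : r ^ 2 = 1 + 2 * t + u)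
    (ht : 0 ≤ t) (hta : t ≤ a) (hu : 0 ≤ u) (hua : u ≤ a ^ 2) (ha : a ≤ 1)
    (hx : |x| ≤ 1) (hp : |p| ≤ a) :
    |r⁻¹ * (x + p) - x - (p - t * x)| ≤ 6 * a ^ 2 := by
  have hr1 : 1 ≤ r := by nlinarith
  have ha0 : 0 ≤ a := ht.trans hta
  have hsum : 2 * t + u ≤ 3 * a := by nlinarith
  have hquad : |r⁻¹ - 1 + (r ^ 2 - 1) / 2 - u / 2| ≤ 31 / 8 * a ^ 2 := by
    refine (abs_sub _ _).trans ?_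
    have := abs_inv_sub_one_add_half_sq_sub_one_le hr1
    rw [abs_of_nonneg (by positivity : 0 ≤ u / 2)]
    rw [show r ^ 2 - 1 = 2 * t + u by linarith] at this ⊢
    nlinarith [mul_le_mul hsum hsum (by positivity) (by linarith)]
  have hlin : |r⁻¹ - 1| ≤ 3 / 2 * a := by
    refine (abs_inv_sub_one_le_half_sq_sub_one hr1).trans ?_
    linarith
  have hsplit : r⁻¹ * (x + p) - x - (p - t * x)
      = (r⁻¹ - 1 + (r ^ 2 - 1) / 2 - u / 2) * x + (r⁻¹ - 1) * p := by
    linear_combination (-x / 2) * hr2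
  rw [hsplit]
  calc |(r⁻¹ - 1 + (r ^ 2 - 1) / 2 - u / 2) * x + (r⁻¹ - 1) * p|
      ≤ |r⁻¹ - 1 + (r ^ 2 - 1) / 2 - u / 2| * |x| + |r⁻¹ - 1| * |p| := by
        rw [← abs_mul, ← abs_mul]
        exact abs_add_le _ _
    _ ≤ 31 / 8 * a ^ 2 * 1 + 3 / 2 * a * a := by gcongr
    _ ≤ 6 * a ^ 2 := by nlinarith

lemma norm_add_smul_inner_smul_sq {E : Type*} [NormedAddCommGroup E] [InnerProductSpace ℝ E]
    {v : E} (hv : ‖v‖ = 1) (Y : E) (β : ℝ) :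
    ‖v + (β * ⟪v, Y⟫) • Y‖ ^ 2 = 1 + 2 * (β * ⟪v, Y⟫ ^ 2) + (β * ⟪v, Y⟫) ^ 2 * ‖Y‖ ^ 2 := by
  rw [norm_add_sq_real, hv, real_inner_smul_right, norm_smul, mul_pow, Real.norm_eq_abs, sq_abs]
  ring

/-- Per-coordinate increment decomposition of one step of Oja's iteration. -/
theorem oja_increment_decomposition :
    ∃ C : ℝ, 0 < C ∧
      ∀ (d : ℕ) (v Y : EuclideanSpace ℝ (Fin d)) (B β : ℝ),
        ‖v‖ = 1 → ‖Y‖ ^ 2 ≤ B → 0 < β → β ≤ 1 / (3 * B) →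
        ∀ k : Fin d, ∃ Q : ℝ, |Q| ≤ C * B ^ 2 * β ^ 2 ∧
          (‖v + (β * (inner ℝ v Y : ℝ)) • Y‖⁻¹ • (v + (β * (inner ℝ v Y : ℝ)) • Y)) k - v k
            = β * ((inner ℝ v Y : ℝ) * Y k - v k * (inner ℝ v Y : ℝ) ^ 2) + Q := by
  refine ⟨6, by norm_num, fun d v Y B β hv hY hβ hβB k => ?_⟩
  set s := ⟪v, Y⟫
  have hB : 0 < B := by
    by_contra! hB
    linarith [one_div_nonpos.2 (by linarith : 3 * B ≤ 0)]
  have ha : β * B ≤ 1 := by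
    rw [le_div_iff₀ (by positivity)] at hβB
    linarith
  have hs : |s| ≤ ‖Y‖ := by simpa [hv] using abs_real_inner_le_norm v Y
  have hvk : |v k| ≤ 1 := hv ▸ PiLp.norm_apply_le v k
  have hYk : |Y k| ≤ ‖Y‖ := PiLp.norm_apply_le Y k
  have hYB : β * ‖Y‖ ^ 2 ≤ β * B := by gcongr
  have hsY : β * s ^ 2 ≤ β * ‖Y‖ ^ 2 :=
    mul_le_mul_of_nonneg_left (sq_le_sq' (abs_le.1 hs).1 (abs_le.1 hs).2) hβ.le
  have hp : |β * s * Y k| ≤ β * B := by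
    rw [abs_mul, abs_mul, abs_of_pos hβ, mul_assoc]
    exact hYB.trans' (by rw [sq]; gcongr)
  refine ⟨_, ?_, (add_sub_cancel _ _).symm⟩
  have hcoord : (‖v + (β * s) • Y‖⁻¹ • (v + (β * s) • Y)) k
      = ‖v + (β * s) • Y‖⁻¹ * (v k + β * s * Y k) := by
    simp [mul_add, mul_assoc]
  rw [hcoord, show 6 * B ^ 2 * β ^ 2 = 6 * (β * B) ^ 2 by ring]
  convert abs_inv_mul_add_sub_sub_le (norm_nonneg _) (norm_add_smul_inner_smul_sq hv Y β)
    (by positivity) (hsY.trans hYB) (by positivity) ?_ ha hvk hp using 2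
  · ring
  · calc (β * s) ^ 2 * ‖Y‖ ^ 2 = (β * s ^ 2) * (β * ‖Y‖ ^ 2) := by ring
      _ ≤ (β * B) * (β * B) := mul_le_mul (hsY.trans hYB) hYB (by positivity) (by positivity)
      _ = (β * B) ^ 2 := by ring
end

section
/- Suppose λ₂ = λ₃ = … = λ_d and ‖V⁰‖ = 1. Then the first coordinate of the ODE solution satisfies V₁(t)² = (V₁⁰)² e^{2λ₁t} / ((V₁⁰)² e^{2λ₁t} + (1 - (V₁⁰)²) e^{2λ₂t}), which is the logistic curve: it satisfies d/dt (V₁²) = 2(λ₁ - λ₂) V₁² (1 - V₁²). -/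
/-!
Since all eigenvalues but the first coincide, the normalizing sum collapses to
`Z(t) = A e^{2λ₁t} + (1 - A) e^{2λ₂t}` with `A = (V₁⁰)²`, so `V₁(t)² = A e^{2λ₁t} / Z(t)`.
A quotient `u / (u + v)` of exponentials `u = A e^{as}`, `v = B e^{bs}` has derivative
`(a - b) u v / (u + v)²`, which is the logistic law `(a - b) p (1 - p)`.
-/

open Real

theorem Fin.sum_mul_eq_of_tail_const {R : Type*} [CommRing R] {n : ℕ} (w f : Fin (n + 1) → R)
    {c : R} (hf : ∀ i : Fin n, f i.succ = c) :
    ∑ i, w i * f i = w 0 * f 0 + (∑ i, w i - w 0) * c := by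
  simp only [Fin.sum_univ_succ, hf, ← Finset.sum_mul, add_sub_cancel_left]

theorem sq_inv_sqrt_mul {z : ℝ} (hz : 0 ≤ z) (x : ℝ) : ((√z)⁻¹ * x) ^ 2 = x ^ 2 / z := by
  rw [mul_pow, inv_pow, sq_sqrt hz, inv_mul_eq_div]

theorem sq_mul_exp (x a : ℝ) : (x * exp a) ^ 2 = x ^ 2 * exp (2 * a) := by
  rw [mul_pow, ← exp_nat_mul]
  norm_num

noncomputable def logistic (A B a b s : ℝ) : ℝ :=
  A * exp (a * s) / (A * exp (a * s) + B * exp (b * s))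

theorem logistic_denom_pos {A : ℝ} (hA₀ : 0 ≤ A) (hA₁ : A ≤ 1) (a b s : ℝ) :
    0 < A * exp (a * s) + (1 - A) * exp (b * s) := by
  have hmin : 0 < min (exp (a * s)) (exp (b * s)) := lt_min (exp_pos _) (exp_pos _)
  nlinarith [min_le_left (exp (a * s)) (exp (b * s)), min_le_right (exp (a * s)) (exp (b * s)),
    mul_nonneg hA₀ hmin.le]

theorem hasDerivAt_logistic {A B a b t : ℝ} (h : A * exp (a * t) + B * exp (b * t) ≠ 0) :
    HasDerivAt (logistic A B a b)
      ((a - b) * logistic A B a b t * (1 - logistic A B a b t)) t := by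
  have hexp (C c : ℝ) : HasDerivAt (fun s => C * exp (c * s)) (C * exp (c * t) * c) t := by
    simpa [mul_assoc] using (((hasDerivAt_id t).const_mul c).exp).const_mul C
  refine ((hexp A a).div ((hexp A a).add (hexp B b)) h).congr_deriv ?_
  simp only [logistic, Pi.add_apply]
  generalize A * exp (a * t) = u at h ⊢
  generalize B * exp (b * t) = v at h ⊢
  field_simp
  ring

/-- In the degenerate-spectrum case, the first coordinate squared of the Oja
ODE solution is the logistic curve. -/
theorem oja_ode_logistic_case
    (d : ℕ) (L : Fin (d + 2) → ℝ)
    (hdeg : ∀ i j : Fin (d + 2), i ≠ 0 → j ≠ 0 → L i = L j)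
    (V0 : Fin (d + 2) → ℝ) (hunit : ∑ i, (V0 i) ^ 2 = 1)
    (V : Fin (d + 2) → ℝ → ℝ)
    (hV : ∀ k t, V k t =
      (Real.sqrt (∑ i, (V0 i) ^ 2 * Real.exp (2 * L i * t)))⁻¹ *
        (V0 k * Real.exp (L k * t))) :
    ∀ t : ℝ,
      (V 0 t) ^ 2 =
        (V0 0) ^ 2 * Real.exp (2 * L 0 * t) /
          ((V0 0) ^ 2 * Real.exp (2 * L 0 * t)
            + (1 - (V0 0) ^ 2) * Real.exp (2 * L 1 * t)) ∧
      HasDerivAt (fun s => (V 0 s) ^ 2)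
        (2 * (L 0 - L 1) * (V 0 t) ^ 2 * (1 - (V 0 t) ^ 2)) t := by
  intro t
  have hA₁ : V0 0 ^ 2 ≤ 1 :=
    hunit ▸ Finset.single_le_sum (fun i _ => sq_nonneg (V0 i)) (Finset.mem_univ 0)
  have hpos := logistic_denom_pos (sq_nonneg (V0 0)) hA₁ (2 * L 0) (2 * L 1)
  have hZ (s : ℝ) : ∑ i, V0 i ^ 2 * exp (2 * L i * s) =
      V0 0 ^ 2 * exp (2 * L 0 * s) + (1 - V0 0 ^ 2) * exp (2 * L 1 * s) := by
    rw [Fin.sum_mul_eq_of_tail_const _ _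
      fun i => by rw [hdeg i.succ 1 i.succ_ne_zero one_ne_zero], hunit]
  have hlog : (fun s => V 0 s ^ 2) = logistic (V0 0 ^ 2) (1 - V0 0 ^ 2) (2 * L 0) (2 * L 1) :=
    funext fun s => by
      rw [hV, hZ, sq_inv_sqrt_mul (hpos s).le, sq_mul_exp, ← mul_assoc]
      rfl
  have ht : V 0 t ^ 2 = logistic (V0 0 ^ 2) (1 - V0 0 ^ 2) (2 * L 0) (2 * L 1) t := congrFun hlog t
  refine ⟨ht, ?_⟩
  rw [hlog, ht]
  convert hasDerivAt_logistic (hpos t).ne' using 1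
  ring
end
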